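/- arXiv:0901.1815 — 2 statements merged into one kernel-verified Lean document; each statement's English description precedes it below -/
import Mathlib

section
/- Let M be a compact metric space with Borel probability measures m, μ, and suppose g: M → M is a Borel map with g_*m = μ, μ is absolutely continuous with respect to m with density η = dμ/dm, and η > 0 m-a.e. Suppose f: M → M is Borel with f_*m = ν and f(g(x)) = x for m-a.e. x. Then ν is absolutely continuous with respect to m with density ρ = 1/(η∘g), i.e. ρ(x)·η(g(x)) = 1 for m-a.e. x. -/
open MeasureTheory
open scoped ENNReal

/-- if `μ = g_*m` has `m`-a.e. positive density `η` w.r.t. `m`, and `f` is a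
Borel map with `f ∘ g = id` `m`-a.e. and `ν = f_*m`, then `ν` is absolutely continuous
w.r.t. `m` with density `ρ = 1/(η ∘ g)`, which satisfies `ρ(x)·η(g x) = 1` a.e. -/
theorem density_of_conjugate {M : Type*} [MetricSpace M] [CompactSpace M]
    [MeasurableSpace M] [BorelSpace M]
    (m μ ν : Measure M) [IsProbabilityMeasure m] [IsProbabilityMeasure μ]
    [IsProbabilityMeasure ν]
    (g f : M → M) (hg : Measurable g) (hf : Measurable f)
    (η : M → ℝ≥0∞) (hη : Measurable η)
    (hμg : μ = m.map g) (hμ : μ = m.withDensity η)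
    (hηpos : ∀ᵐ x ∂m, 0 < η x) (hηfin : ∀ᵐ x ∂m, η x < ⊤)
    (hν : ν = m.map f) (hfg : ∀ᵐ x ∂m, f (g x) = x) :
    ν = m.withDensity (fun x => (η (g x))⁻¹) ∧
      ∀ᵐ x ∂m, (η (g x))⁻¹ * η (g x) = 1 := by
  have hgfacts : ∀ᵐ x ∂m, 0 < η (g x) ∧ η (g x) < ⊤ := by
    have hmeas : MeasurableSet {y | η y ∈ Set.Ioo 0 ⊤} := hη measurableSet_Ioo
    have hmu : ∀ᵐ y ∂μ, η y ∈ Set.Ioo 0 ⊤ := by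
      rw [hμ]
      exact (withDensity_absolutelyContinuous m η).ae_le
        ((hηpos.and hηfin).mono fun y hy => Set.mem_Ioo.mpr hy)
    rw [hμg] at hmu
    exact ((ae_map_iff hg.aemeasurable hmeas).mp hmu).mono fun x hx => Set.mem_Ioo.mp hx
  have hcancel : ∀ᵐ x ∂m, (η (g x))⁻¹ * η (g x) = 1 := by
    filter_upwards [hgfacts] with x hx
    exact ENNReal.inv_mul_cancel hx.1.ne' hx.2.ne
  refine ⟨?_, hcancel⟩
  rw [hν]
  ext s hs
  have hFmeas : Measurable (fun y => (f ⁻¹' s).indicator (fun y => (η y)⁻¹) y) :=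
    (hη.inv).indicator (hf hs)
  have key : ∫⁻ x, (f ⁻¹' s).indicator (fun y => (η y)⁻¹) (g x) ∂m
      = ∫⁻ y, η y * (f ⁻¹' s).indicator (fun y => (η y)⁻¹) y ∂m := by
    rw [← lintegral_map hFmeas hg, ← hμg, hμ,
      lintegral_withDensity_eq_lintegral_mul m hη hFmeas]
    rfl
  have lhs : ∫⁻ x, (f ⁻¹' s).indicator (fun y => (η y)⁻¹) (g x) ∂m
      = (m.withDensity fun x => (η (g x))⁻¹) s := by
    rw [withDensity_apply _ hs, ← lintegral_indicator hs]
    apply lintegral_congr_ae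
    filter_upwards [hfg] with x hx
    by_cases hxs : x ∈ s
    · rw [Set.indicator_of_mem (by simpa [Set.mem_preimage, hx] using hxs),
        Set.indicator_of_mem hxs]
    · rw [Set.indicator_of_notMem (by simpa [Set.mem_preimage, hx] using hxs),
        Set.indicator_of_notMem hxs]
  have rhs : ∫⁻ y, η y * (f ⁻¹' s).indicator (fun y => (η y)⁻¹) y ∂m
      = (m.map f) s := by
    rw [Measure.map_apply hf hs]
    have : ∫⁻ y, η y * (f ⁻¹' s).indicator (fun y => (η y)⁻¹) y ∂m
        = ∫⁻ y, (f ⁻¹' s).indicator (fun _ => (1 : ℝ≥0∞)) y ∂m := by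
      apply lintegral_congr_ae
      filter_upwards [hηpos, hηfin] with y h0 ht
      by_cases hy : y ∈ f ⁻¹' s
      · rw [Set.indicator_of_mem hy, Set.indicator_of_mem hy,
          ENNReal.mul_inv_cancel h0.ne' ht.ne]
      · rw [Set.indicator_of_notMem hy, Set.indicator_of_notMem hy, mul_zero]
    rw [this, lintegral_indicator (hf hs), setLIntegral_one]
  rw [← rhs, ← lhs]
  exact key.symm
end

section
/- Let m be an absolutely continuous probability measure on a compact convex set M ⊂ ℝⁿ, and let φ₁: M → ℝ be a convex function with gradient g = ∇φ₁ defined m-a.e. If the pushforward g_*m has an atom at z of mass λ > 0 (i.e. m({x : ∇φ₁(x) = z}) = λ), then there is an open convex set U ⊂ M with m(U) = λ on which φ₁ is affine with gradient z, i.e. ∇φ₁ ≡ z on U. -/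
open MeasureTheory
open scoped ENNReal

open Set Filter
open scoped Topology RealInnerProductSpace

/-- Minimum principle: a point of a convex set where a convex function has gradient `0`
is a global minimum on the set. -/
lemma min_of_gradient_zero {E : Type*} [NormedAddCommGroup E] [InnerProductSpace ℝ E]
    [CompleteSpace E]
    {s : Set E} {ψ : E → ℝ} (hψ : ConvexOn ℝ s ψ) {y : E} (hy : y ∈ s)
    (hgy : HasGradientAt ψ 0 y) {x : E} (hx : x ∈ s) : ψ y ≤ ψ x := by
  set v := x - y with hv
  have hline : HasDerivAt (fun t : ℝ => ψ (y + t • v)) 0 0 := by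
    have hγ : HasDerivAt (fun t : ℝ => y + t • v) v 0 := by
      simpa using ((hasDerivAt_id (0:ℝ)).smul_const v).const_add y
    have hF : HasFDerivAt ψ (0 : E →L[ℝ] ℝ) y := by
      simpa using hgy.hasFDerivAt
    have hF' : HasFDerivAt ψ (0 : E →L[ℝ] ℝ) ((fun t : ℝ => y + t • v) 0) := by
      simpa using hF
    have := hF'.comp_hasDerivAt (0:ℝ) hγ
    simpa using (show HasDerivAt (fun t : ℝ => ψ (y + t • v)) _ 0 from this)
  have hslope : ∀ t ∈ Ioo (0:ℝ) 1, slope (fun t : ℝ => ψ (y + t • v)) 0 t ≤ ψ x - ψ y := by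
    intro t ht
    have hmem : y + t • v = (1 - t) • y + t • x := by
      simp [hv, smul_sub, sub_smul]; abel
    have hle : ψ (y + t • v) ≤ (1 - t) * ψ y + t * ψ x := by
      rw [hmem]
      exact hψ.2 hy hx (by linarith [ht.2]) ht.1.le (by ring)
    have ht0 : (0:ℝ) < t := ht.1
    have h0v : y + (0:ℝ) • v = y := by simp
    rw [slope_def_field, h0v, sub_zero, div_le_iff₀ ht0]
    nlinarith [hle]
  have htend : Tendsto (slope (fun t : ℝ => ψ (y + t • v)) 0) (𝓝[>] (0:ℝ)) (𝓝 0) := by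
    have := hasDerivAt_iff_tendsto_slope.mp hline
    exact this.mono_left (nhdsWithin_mono _ (fun t ht => ne_of_gt ht))
  have h0 : (0:ℝ) ≤ ψ x - ψ y := by
    refine le_of_tendsto htend ?_
    filter_upwards [Ioo_mem_nhdsGT_of_mem (by norm_num : (0:ℝ) ∈ Ico (0:ℝ) 1)] with t ht
    exact hslope t ht
  linarith


/-- if the a.e.-defined gradient `G = ∇φ₁` of a convex function `φ₁` on a
compact convex `M ⊂ ℝⁿ` pushes the absolutely continuous probability measure `m`
(with full support on `M`) to a measure with an atom of mass `λ > 0` at `z`, then there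
is an open convex set `U ⊆ M` with `m(U) = λ` on which `φ₁` has gradient `z`. -/
theorem atom_gives_flat_piece {n : ℕ} (M : Set (EuclideanSpace ℝ (Fin n)))
    (hMc : IsCompact M) (hMconv : Convex ℝ M)
    (m : Measure (EuclideanSpace ℝ (Fin n))) [IsProbabilityMeasure m]
    (hm : m ≪ volume) (hsupp : m Mᶜ = 0) (hfull : ∀ V : Set (EuclideanSpace ℝ (Fin n)),
      IsOpen V → (V ∩ M).Nonempty → 0 < m V)
    (φ₁ : EuclideanSpace ℝ (Fin n) → ℝ) (hφ : ConvexOn ℝ M φ₁)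
    (G : EuclideanSpace ℝ (Fin n) → EuclideanSpace ℝ (Fin n)) (hG : Measurable G)
    (hgrad : ∀ᵐ x ∂m, HasGradientAt φ₁ (G x) x)
    (z : EuclideanSpace ℝ (Fin n)) (lam : ℝ≥0∞) (hlam : 0 < lam)
    (hatom : m {x | G x = z} = lam) :
    ∃ U : Set (EuclideanSpace ℝ (Fin n)), U ⊆ M ∧ IsOpen U ∧ Convex ℝ U ∧ m U = lam ∧
      ∀ x ∈ U, HasGradientAt φ₁ z x := by
  classical
  set ψ : (EuclideanSpace ℝ (Fin n)) → ℝ := fun x => φ₁ x - ⟪z, x⟫ with hψdef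
  -- ψ is convex on M
  have hψconv : ConvexOn ℝ M ψ := by
    refine ⟨hMconv, fun x hx y hy a b ha hb hab => ?_⟩
    have h1 := hφ.2 hx hy ha hb hab
    have h2 : ⟪z, a • x + b • y⟫ = a * ⟪z, x⟫ + b * ⟪z, y⟫ := by
      rw [inner_add_right, real_inner_smul_right, real_inner_smul_right]
    simp only [hψdef, smul_eq_mul] at h1 ⊢
    rw [h2]
    linarith
  -- at any point where φ₁ has gradient z, ψ has gradient 0
  have hψgrad : ∀ y : (EuclideanSpace ℝ (Fin n)), HasGradientAt φ₁ z y → HasGradientAt ψ 0 y := by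
    intro y hgy
    have h1 : HasFDerivAt φ₁ (InnerProductSpace.toDual ℝ (EuclideanSpace ℝ (Fin n)) z) y :=
      hasGradientAt_iff_hasFDerivAt.mp hgy
    have h2 : HasFDerivAt (fun w : (EuclideanSpace ℝ (Fin n)) => ⟪z, w⟫) (innerSL ℝ z) y :=
      (innerSL ℝ z).hasFDerivAt
    have h3 := h1.sub h2
    have heq : InnerProductSpace.toDual ℝ (EuclideanSpace ℝ (Fin n)) z - innerSL ℝ z = 0 := by
      ext w; simp [InnerProductSpace.toDual_apply_apply]
    rw [heq] at h3
    exact hasGradientAt_iff_hasFDerivAt.mpr (by simpa using (show HasFDerivAt ψ _ y from h3))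
  -- the gradient-z affine comparison function
  have haff : ∀ (c : ℝ) (x : (EuclideanSpace ℝ (Fin n))), HasGradientAt (fun w : (EuclideanSpace ℝ (Fin n)) => ⟪z, w⟫ + c) z x := by
    intro c x
    have h2 : HasFDerivAt (fun w : (EuclideanSpace ℝ (Fin n)) => ⟪z, w⟫ + c) (innerSL ℝ z) x :=
      (innerSL ℝ z).hasFDerivAt.add_const c
    refine hasGradientAt_iff_hasFDerivAt.mpr ?_
    have : (InnerProductSpace.toDual ℝ (EuclideanSpace ℝ (Fin n)) z : (EuclideanSpace ℝ (Fin n)) →L[ℝ] ℝ) = innerSL ℝ z := by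
      ext w; simp [InnerProductSpace.toDual_apply_apply]
    rw [this]; exact h2
  set A : Set (EuclideanSpace ℝ (Fin n)) := {x | G x = z} ∩ {x | HasGradientAt φ₁ (G x) x} ∩ M with hAdef
  have hAsub : A ⊆ M := fun x hx => hx.2
  have hAgrad : ∀ x ∈ A, HasGradientAt φ₁ z x := fun x hx => hx.1.1 ▸ hx.1.2
  have hN : m {x | ¬ HasGradientAt φ₁ (G x) x} = 0 := ae_iff.mp hgrad
  have hmA : m A = lam := by
    refine le_antisymm (hatom ▸ measure_mono (fun x hx => hx.1.1)) ?_
    have hsub : {x : (EuclideanSpace ℝ (Fin n)) | G x = z} ⊆ A ∪ ({x | ¬ HasGradientAt φ₁ (G x) x} ∪ Mᶜ) := by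
      intro x hx
      by_cases h1 : HasGradientAt φ₁ (G x) x
      · by_cases h2 : x ∈ M
        · exact Or.inl ⟨⟨hx, h1⟩, h2⟩
        · exact Or.inr (Or.inr h2)
      · exact Or.inr (Or.inl h1)
    calc lam = m {x : (EuclideanSpace ℝ (Fin n)) | G x = z} := hatom.symm
      _ ≤ m (A ∪ ({x | ¬ HasGradientAt φ₁ (G x) x} ∪ Mᶜ)) := measure_mono hsub
      _ ≤ m A + m ({x | ¬ HasGradientAt φ₁ (G x) x} ∪ Mᶜ) := measure_union_le _ _
      _ ≤ m A + (m {x | ¬ HasGradientAt φ₁ (G x) x} + m Mᶜ) := by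
          gcongr; exact measure_union_le _ _
      _ = m A := by rw [hN, hsupp]; simp
  have hAne : A.Nonempty := by
    rcases A.eq_empty_or_nonempty with h | h
    · exfalso; rw [h] at hmA; simp at hmA; exact hlam.ne' hmA.symm
    · exact h
  obtain ⟨y₀, hy₀⟩ := hAne
  set c := ψ y₀ with hc
  have hmin : ∀ x ∈ M, c ≤ ψ x := fun x hx =>
    min_of_gradient_zero hψconv (hAsub hy₀) (hψgrad y₀ (hAgrad y₀ hy₀)) hx
  have hconstA : ∀ a ∈ A, ψ a = c := fun a ha =>
    le_antisymm (min_of_gradient_zero hψconv (hAsub ha) (hψgrad a (hAgrad a ha)) (hAsub hy₀))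
      (hmin a (hAsub ha))
  have hhullM : convexHull ℝ A ⊆ M := convexHull_min hAsub hMconv
  have hconstHull : ∀ x ∈ convexHull ℝ A, ψ x = c := by
    intro x hx
    obtain ⟨a, ha, hle⟩ := hψconv.exists_ge_of_mem_convexHull hAsub hx
    exact le_antisymm (hle.trans_eq (hconstA a ha)) (hmin x (hhullM hx))
  set U : Set (EuclideanSpace ℝ (Fin n)) := interior (convexHull ℝ A) with hUdef
  have hUsub : U ⊆ M := interior_subset.trans hhullM
  have hgradU : ∀ x ∈ U, HasGradientAt φ₁ z x := by
    intro x hx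
    refine (haff c x).congr_of_eventuallyEq ?_
    filter_upwards [isOpen_interior.mem_nhds hx] with w hw
    have := hconstHull w (interior_subset hw)
    simp only [hψdef] at this
    linarith
  have hfr : m (frontier (convexHull ℝ A)) = 0 :=
    hm ((convex_convexHull ℝ A).addHaar_frontier volume)
  have h1 : lam ≤ m U := by
    have hsub : convexHull ℝ A ⊆ U ∪ frontier (convexHull ℝ A) := by
      intro x hx
      by_cases h : x ∈ U
      · exact Or.inl h
      · exact Or.inr ⟨subset_closure hx, h⟩
    calc lam = m A := hmA.symm
      _ ≤ m (convexHull ℝ A) := measure_mono (subset_convexHull ℝ A)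
      _ ≤ m (U ∪ frontier (convexHull ℝ A)) := measure_mono hsub
      _ ≤ m U + m (frontier (convexHull ℝ A)) := measure_union_le _ _
      _ = m U := by rw [hfr, add_zero]
  have h2 : m U ≤ lam := by
    have hsub : U ⊆ {x : (EuclideanSpace ℝ (Fin n)) | G x = z} ∪ {x | ¬ HasGradientAt φ₁ (G x) x} := by
      intro x hx
      by_cases h : HasGradientAt φ₁ (G x) x
      · exact Or.inl (h.unique (hgradU x hx))
      · exact Or.inr h
    calc m U ≤ m ({x : (EuclideanSpace ℝ (Fin n)) | G x = z} ∪ {x | ¬ HasGradientAt φ₁ (G x) x}) := measure_mono hsub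
      _ ≤ m {x : (EuclideanSpace ℝ (Fin n)) | G x = z} + m {x | ¬ HasGradientAt φ₁ (G x) x} := measure_union_le _ _
      _ = lam := by rw [hatom, hN, add_zero]
  exact ⟨U, hUsub, isOpen_interior, (convex_convexHull ℝ A).interior, le_antisymm h2 h1, hgradU⟩
end
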